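/- arXiv:1207.3459 — 4 statements merged into one kernel-verified Lean document; each statement's English description precedes it below -/
import Mathlib

section
/- Let Π and G be groups and let Λ be a subgroup of Π × G. There exists a function φ : G → Π satisfying φ(g * h) = σ * φ(h) for every (σ, g) ∈ Λ and every h ∈ G, if and only if Λ ∩ (Π × {1}) is trivial (i.e. (σ, 1) ∈ Λ implies σ = 1). -/
/-!
If `Λ` meets `P × {1}` trivially, an element of `Λ` is determined by its `G`-component. So
writing each `h : G` as `h = k * r h`, with `r h` a fixed representative of the right coset of
`H = pr₂ Λ` through `h` and `k ∈ H`, we may set `φ h := σ`, where `(σ, k)` is the element of `Λ`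
over `k`. Left multiplication by `g ∈ H` does not move `r h`, and `(σ, g) * (φ h, k)` is the
element of `Λ` over `g * k`, so `φ (g * h) = σ * φ h`. Conversely, `(σ, 1) ∈ Λ` forces
`φ h = σ * φ h`, i.e. `σ = 1`.
-/

namespace Subgroup

variable {P G : Type*} [Group P] [Group G]

theorem fst_eq_of_snd_eq {Λ : Subgroup (P × G)} (hΛ : ∀ σ : P, (σ, (1 : G)) ∈ Λ → σ = 1)
    {x y : P × G} (hx : x ∈ Λ) (hy : y ∈ Λ) (h : x.2 = y.2) : x.1 = y.1 := by
  have hxy : x * y⁻¹ = (x.1 * y.1⁻¹, 1) := Prod.ext rfl (mul_inv_eq_one.mpr h)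
  exact mul_inv_eq_one.mp (hΛ _ (hxy ▸ Λ.mul_mem hx (Λ.inv_mem hy)))

end Subgroup

namespace QuotientGroup

variable {G : Type*} [Group G] (H : Subgroup G)

noncomputable def rightCosetRep (g : G) : G :=
  (Quotient.mk'' g : Quotient (rightRel H)).out

theorem mul_inv_rightCosetRep_mem (g : G) : g * (rightCosetRep H g)⁻¹ ∈ H :=
  rightRel_apply.mp (Quotient.mk_out' g)

theorem rightCosetRep_mul_of_mem {g : G} (hg : g ∈ H) (h : G) :
    rightCosetRep H (g * h) = rightCosetRep H h := by
  refine congrArg Quotient.out (Quotient.sound' (rightRel_apply.mpr ?_))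
  simpa [mul_assoc] using H.inv_mem hg

end QuotientGroup

open Subgroup QuotientGroup in
theorem exists_twisted_function_of_forall_fst_eq_one {P G : Type*} [Group P] [Group G]
    {Λ : Subgroup (P × G)} (hΛ : ∀ σ : P, (σ, (1 : G)) ∈ Λ → σ = 1) :
    ∃ φ : G → P, ∀ (σ : P) (g : G), (σ, g) ∈ Λ → ∀ h : G, φ (g * h) = σ * φ h := by
  set H := Λ.map (MonoidHom.snd P G)
  choose x hxΛ hx₂ using fun h => mem_map.mp (mul_inv_rightCosetRep_mem H h)
  refine ⟨fun h => (x h).1, fun σ g hσg h =>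
    fst_eq_of_snd_eq hΛ (hxΛ (g * h)) (Λ.mul_mem hσg (hxΛ h)) ?_⟩
  have hg : g ∈ H := mem_map_of_mem _ hσg
  simp only [MonoidHom.coe_snd] at hx₂
  simp only [hx₂, Prod.snd_mul, rightCosetRep_mul_of_mem H hg, mul_assoc]

/-- There is a function `φ : G → P` satisfying `φ (g * h) = σ * φ h` for every
`(σ, g) ∈ Λ` and every `h`, if and only if `Λ` meets `P × {1}` trivially. -/
theorem exists_twisted_function_iff {P G : Type*} [Group P] [Group G]
    (Λ : Subgroup (P × G)) :
    (∃ φ : G → P, ∀ (σ : P) (g : G), (σ, g) ∈ Λ → ∀ h : G, φ (g * h) = σ * φ h) ↔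
      (∀ σ : P, (σ, (1 : G)) ∈ Λ → σ = 1) := by
  refine ⟨fun ⟨φ, hφ⟩ σ hσ => ?_, exists_twisted_function_of_forall_fst_eq_one⟩
  simpa using hφ σ 1 hσ 1
end

section
/- Let G be a group acting on a type X and let j be a natural number. On pairs (φ, y), where φ : G → Perm(Fin j) and y : Fin j → X, define a right action of Perm(Fin j) by (φ, y) · σ = ((h ↦ φ(h) * σ), (i ↦ y(σ(i)))) and a left action of G by g · (φ, y) = ((h ↦ φ(g⁻¹ h)), (i ↦ g • y(i))); these two actions commute. Let α : G → Perm(Fin j) satisfy α(1) = 1 and let y : Fin j → X. Then the Perm(Fin j)-orbit of (α, y) is G-fixed — that is, for every g ∈ G there exists σ ∈ Perm(Fin j) with g · (α, y) = (α, y) · σ — if and only if α is an anti-homomorphism (α(g h) = α(h) * α(g) for all g, h) and g • y(i) = y(α(g⁻¹)(i)) for all g ∈ G and i ∈ Fin j. -/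
/-!
Comparing the first components of `g · (α, y) = (α, y) · σ` at `h = 1` gives `σ = α g⁻¹`,
so the orbit is `G`-fixed exactly when `α (g⁻¹ * h) = α h * α g⁻¹` and `g • y i = y (α g⁻¹ i)`
for all `g, h, i`; substituting `g⁻¹` for `g` turns the first family of identities into
anti-multiplicativity.
-/

/-- The right action of `σ ∈ Perm (Fin j)` on pairs `(φ, y)`:
`(φ, y) · σ = ((h ↦ φ h * σ), (i ↦ y (σ i)))`. -/
def pairRightAct {G X : Type*} [Group G] {j : ℕ}
    (p : (G → Equiv.Perm (Fin j)) × (Fin j → X)) (σ : Equiv.Perm (Fin j)) :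
    (G → Equiv.Perm (Fin j)) × (Fin j → X) :=
  ((fun h => p.1 h * σ), fun i => p.2 (σ i))

/-- The left action of `g ∈ G` on pairs `(φ, y)`:
`g · (φ, y) = ((h ↦ φ (g⁻¹ h)), (i ↦ g • y i))`. -/
def pairLeftAct {G X : Type*} [Group G] [MulAction G X] {j : ℕ} (g : G)
    (p : (G → Equiv.Perm (Fin j)) × (Fin j → X)) :
    (G → Equiv.Perm (Fin j)) × (Fin j → X) :=
  ((fun h => p.1 (g⁻¹ * h)), fun i => g • p.2 i)

section PairActions

variable {G X : Type*} [Group G] {j : ℕ}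

theorem pairLeftAct_pairRightAct [MulAction G X] (g : G)
    (p : (G → Equiv.Perm (Fin j)) × (Fin j → X)) (σ : Equiv.Perm (Fin j)) :
    pairLeftAct g (pairRightAct p σ) = pairRightAct (pairLeftAct g p) σ :=
  rfl

theorem pairLeftAct_eq_pairRightAct_iff [MulAction G X] {g : G}
    {α : G → Equiv.Perm (Fin j)} {y : Fin j → X} {σ : Equiv.Perm (Fin j)} :
    pairLeftAct g (α, y) = pairRightAct (α, y) σ ↔
      (∀ h, α (g⁻¹ * h) = α h * σ) ∧ ∀ i, g • y i = y (σ i) := by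
  simp only [pairLeftAct, pairRightAct, Prod.ext_iff, funext_iff]

theorem eq_of_pairLeftAct_eq_pairRightAct [MulAction G X] {g : G}
    {α : G → Equiv.Perm (Fin j)} {y : Fin j → X} {σ : Equiv.Perm (Fin j)} (hα : α 1 = 1)
    (hσ : pairLeftAct g (α, y) = pairRightAct (α, y) σ) : σ = α g⁻¹ := by
  have h₁ := (pairLeftAct_eq_pairRightAct_iff.mp hσ).1 1
  rwa [mul_one, hα, one_mul, eq_comm] at h₁

theorem anti_mul_iff_forall_inv_mul {M : Type*} [Mul M] {α : G → M} :
    (∀ g h : G, α (g * h) = α h * α g) ↔ ∀ g h : G, α (g⁻¹ * h) = α h * α g⁻¹ :=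
  inv_surjective.forall

end PairActions

/-- The two actions commute, and for `α` with `α 1 = 1`, the `Perm (Fin j)`-orbit of
`(α, y)` is `G`-fixed if and only if `α` is an anti-homomorphism and
`g • y i = y (α g⁻¹ i)` for all `g, i`. -/
theorem orbit_fixed_iff {G X : Type*} [Group G] [MulAction G X] (j : ℕ) :
    (∀ (g : G) (p : (G → Equiv.Perm (Fin j)) × (Fin j → X)) (σ : Equiv.Perm (Fin j)),
      pairLeftAct g (pairRightAct p σ) = pairRightAct (pairLeftAct g p) σ) ∧
    (∀ (α : G → Equiv.Perm (Fin j)) (y : Fin j → X), α 1 = 1 →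
      ((∀ g : G, ∃ σ : Equiv.Perm (Fin j),
          pairLeftAct g (α, y) = pairRightAct (α, y) σ) ↔
        ((∀ g h : G, α (g * h) = α h * α g) ∧
          ∀ (g : G) (i : Fin j), g • y i = y (α g⁻¹ i)))) := by
  refine ⟨pairLeftAct_pairRightAct, fun α y hα => ?_⟩
  have fixed_iff : ∀ g : G, (∃ σ, pairLeftAct g (α, y) = pairRightAct (α, y) σ) ↔
      pairLeftAct g (α, y) = pairRightAct (α, y) (α g⁻¹) := fun g =>
    ⟨fun ⟨σ, hσ⟩ => eq_of_pairLeftAct_eq_pairRightAct hα hσ ▸ hσ, fun h => ⟨_, h⟩⟩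
  simp_rw [fixed_iff, pairLeftAct_eq_pairRightAct_iff, forall_and, anti_mul_iff_forall_inv_mul]
end

section
/- Let G be a group, H a subgroup, and k a natural number. The group of G-equivariant bijections of Fin k × (G ⧸ H), where G acts trivially on Fin k and by left translation on G ⧸ H, is isomorphic to the wreath product Σ_k ∫ WH, i.e. the semidirect product (Fin k → WH) ⋊ Perm(Fin k), where WH = N_G(H) ⧸ H and Perm(Fin k) acts on the group of functions Fin k → WH by permuting coordinates. -/
/-- The group of `G`-equivariant bijections of `Fin k × (G ⧸ H)`, where `G` acts
trivially on `Fin k` and by left translation on `G ⧸ H`, as a subgroup of the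
permutation group. -/
def equivariantPermsProd (G : Type*) [Group G] (H : Subgroup G) (k : ℕ) :
    Subgroup (Equiv.Perm (Fin k × (G ⧸ H))) where
  carrier := {f | ∀ (g : G) (i : Fin k) (x : G ⧸ H),
    f (i, g • x) = ((f (i, x)).1, g • (f (i, x)).2)}
  one_mem' := fun _ _ _ => rfl
  mul_mem' := by
    intro f f' hf hf' g i x
    simp only [Equiv.Perm.mul_apply]
    rw [hf' g i x]
    exact hf g (f' (i, x)).1 (f' (i, x)).2
  inv_mem' := by
    intro f hf g i x
    apply f.injective
    rw [← Equiv.Perm.mul_apply, mul_inv_cancel, Equiv.Perm.one_apply, hf g (f⁻¹ (i, x)).1 (f⁻¹ (i, x)).2]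
    rw [← Equiv.Perm.mul_apply, mul_inv_cancel, Equiv.Perm.one_apply]

/-- The homomorphism `Perm (Fin k) →* MulAut (Fin k → W)` permuting the coordinates:
`(σ • f) i = f (σ⁻¹ i)`. -/
def permuteCoords (W : Type*) [Group W] (k : ℕ) :
    Equiv.Perm (Fin k) →* MulAut (Fin k → W) where
  toFun σ := MulEquiv.arrowCongr σ (MulEquiv.refl W)
  map_one' := rfl
  map_mul' := fun σ τ => rfl

/-!
The Weyl group acts on `G ⧸ H` by right translations `gH ↦ gn⁻¹H`, faithfully and by
`G`-equivariant maps. Conversely an equivariant bijection `e` of `G ⧸ H` is determined by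
`e H = aH`, since then `e (gH) = gaH`; being an equivariant bijection, `e` preserves stabilizers,
so `aHa⁻¹ = H` and `a` normalizes `H`.

Since `G` acts transitively on each copy `{i} × (G ⧸ H)`, an equivariant bijection of
`Fin k × (G ⧸ H)` maps every copy onto a copy `{σ i} × (G ⧸ H)`, and restricts there to an
equivariant bijection of `G ⧸ H`, i.e. to a Weyl group element: this is exactly an element
`(w, σ)` of the wreath product.
-/

open Equiv MulAction Subgroup

theorem MulAction.stabilizer_apply_eq_of_injective {G X Y : Type*} [Group G] [MulAction G X]
    [MulAction G Y] {e : X → Y} (he : ∀ (g : G) (x : X), e (g • x) = g • e x)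
    (he_inj : Function.Injective e) (x : X) : stabilizer G (e x) = stabilizer G x := by
  ext g
  rw [mem_stabilizer_iff, mem_stabilizer_iff, ← he, he_inj.eq_iff]

section WeylGroup

variable {G : Type*} [Group G] (H : Subgroup G)

abbrev WeylGroup : Type _ := normalizer (H : Set G) ⧸ H.subgroupOf (normalizer (H : Set G))

/-- Mathlib's right action of the normalizer on `G ⧸ H`, made a left action by inversion. -/
def normalizerToPerm : normalizer (H : Set G) →* Perm (G ⧸ H) where
  toFun n := toPerm (⟨MulOpposite.op (n : G)⁻¹, n⁻¹.2⟩ : (normalizer (H : Set G)).op)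
  map_one' := by
    ext x
    induction x using QuotientGroup.induction_on
    simp
  map_mul' n m := by
    ext x
    induction x using QuotientGroup.induction_on
    simp [mul_assoc]

def weylToPerm : WeylGroup H →* Perm (G ⧸ H) :=
  QuotientGroup.lift _ (normalizerToPerm H) fun n hn => by
    ext x
    induction x using QuotientGroup.induction_on
    simpa [normalizerToPerm, QuotientGroup.eq, mem_subgroupOf] using hn

theorem weylToPerm_mk (n : normalizer (H : Set G)) (g : G) :
    weylToPerm H n g = (g * (n : G)⁻¹ : G) := rfl

theorem weylToPerm_smul (w : WeylGroup H) (g : G) (x : G ⧸ H) :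
    weylToPerm H w (g • x) = g • weylToPerm H w x := by
  induction w using QuotientGroup.induction_on
  induction x using QuotientGroup.induction_on
  simp [weylToPerm_mk, mul_assoc]

theorem weylToPerm_injective : Function.Injective (weylToPerm H) := by
  refine (injective_iff_map_eq_one _).mpr fun w hw => ?_
  induction w using QuotientGroup.induction_on with | H n => ?_
  have h := congr($hw ((1 : G) : G ⧸ H))
  rw [weylToPerm_mk, one_mul, Perm.one_apply, QuotientGroup.eq] at h
  simpa [QuotientGroup.eq_one_iff, mem_subgroupOf] using h

theorem mem_range_weylToPerm (e : Perm (G ⧸ H)) :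
    e ∈ (weylToPerm H).range ↔ ∀ (g : G) (x : G ⧸ H), e (g • x) = g • e x := by
  refine ⟨fun ⟨w, hw⟩ => hw ▸ weylToPerm_smul H w, fun he => ?_⟩
  obtain ⟨a, ha⟩ := QuotientGroup.mk_surjective (e (1 : G))
  have ha_norm : a ∈ normalizer (H : Set G) := by
    rw [mem_normalizer_iff_map_conj_eq]
    calc H.map (MulAut.conj a).toMonoidHom
        = stabilizer G (a • ((1 : G) : G ⧸ H)) := by
          rw [stabilizer_smul_eq_stabilizer_map_conj, stabilizer_quotient]
      _ = stabilizer G (e (1 : G)) := by rw [← ha, Quotient.smul_coe, smul_eq_mul, mul_one]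
      _ = H := by rw [stabilizer_apply_eq_of_injective he e.injective, stabilizer_quotient]
  refine ⟨(⟨a, ha_norm⟩⁻¹ : normalizer (H : Set G)), ?_⟩
  ext x
  induction x using QuotientGroup.induction_on with | H g => ?_
  calc weylToPerm H (⟨a, ha_norm⟩⁻¹ : normalizer (H : Set G)) g
      = g • (a : G ⧸ H) := by rw [weylToPerm_mk, InvMemClass.coe_inv, inv_inv]; rfl
    _ = e g := by rw [ha, ← he, Quotient.smul_coe, smul_eq_mul, mul_one]

end WeylGroup

def Equiv.Perm.arrowCongrHom (W : Type*) [Group W] {ι : Type*} : Perm ι →* MulAut (ι → W) where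
  toFun σ := MulEquiv.arrowCongr σ (MulEquiv.refl W)
  map_one' := rfl
  map_mul' _ _ := rfl

theorem Equiv.Perm.arrowCongrHom_apply {W ι : Type*} [Group W] (σ : Perm ι) (w : ι → W) (i : ι) :
    arrowCongrHom W σ w i = w (σ.symm i) := rfl

theorem Equiv.Perm.exists_eq_prodShear {α β : Type*} [Nonempty β] (f : Perm (α × β))
    (s t : α → α) (hs : ∀ p, (f p).1 = s p.1) (ht : ∀ p, (f.symm p).1 = t p.1) :
    ∃ (σ : Perm α) (e : α → Perm β), f = prodShear σ e := by
  obtain ⟨b₀⟩ := ‹Nonempty β›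
  have hts (a : α) : t (s a) = a := by
    rw [← hs (a, b₀), ← ht, symm_apply_apply]
  have hst (a : α) : s (t a) = a := by
    rw [← ht (a, b₀), ← hs, apply_symm_apply]
  have hf_symm (a : α) (b : β) : f.symm (s a, b) = (a, (f.symm (s a, b)).2) :=
    Prod.ext (by rw [ht, hts]) rfl
  let e (a : α) : Perm β :=
    ⟨fun b => (f (a, b)).2, fun b => (f.symm (s a, b)).2,
      fun b => by dsimp only; rw [← hs (a, b), Prod.mk.eta, symm_apply_apply],
      fun b => by dsimp only; rw [← hf_symm, apply_symm_apply]⟩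
  exact ⟨⟨s, t, hts, hst⟩, e, Equiv.ext fun p => Prod.ext (hs p) rfl⟩

section Wreath

variable {G X W ι : Type*} [Group G] [MulAction G X] [Group W]

variable (G) in
def IsSndEquivariant (f : Perm (ι × X)) : Prop :=
  ∀ (g : G) (i : ι) (x : X), f (i, g • x) = ((f (i, x)).1, g • (f (i, x)).2)

theorem IsSndEquivariant.symm {f : Perm (ι × X)} (hf : IsSndEquivariant G f) :
    IsSndEquivariant G f.symm := fun g i x => by
  apply f.injective
  rw [apply_symm_apply, hf, apply_symm_apply]

theorem IsSndEquivariant.fst_apply_eq [IsPretransitive G X] {f : Perm (ι × X)}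
    (hf : IsSndEquivariant G f) (i : ι) (x y : X) : (f (i, y)).1 = (f (i, x)).1 := by
  obtain ⟨g, rfl⟩ := exists_smul_eq G x y
  rw [hf]

theorem IsSndEquivariant.exists_eq_prodShear [Nonempty X] [IsPretransitive G X]
    {f : Perm (ι × X)} (hf : IsSndEquivariant G f) :
    ∃ (σ : Perm ι) (e : ι → Perm X),
      f = prodShear σ e ∧ ∀ i (g : G) (x : X), e i (g • x) = g • e i x := by
  obtain ⟨x₀⟩ := ‹Nonempty X›
  obtain ⟨σ, e, rfl⟩ := Perm.exists_eq_prodShear f (fun i => (f (i, x₀)).1)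
    (fun i => (f.symm (i, x₀)).1) (fun _ => hf.fst_apply_eq _ _ _)
    (fun _ => hf.symm.fst_apply_eq _ _ _)
  exact ⟨σ, e, rfl, fun i g x => congr_arg Prod.snd (hf g i x)⟩

def wreathToPerm (ρ : W →* Perm X) :
    (ι → W) ⋊[Perm.arrowCongrHom W] Perm ι →* Perm (ι × X) where
  toFun p := prodShear p.right fun i => ρ (p.left (p.right i))
  map_one' := by ext <;> simp
  map_mul' := by
    rintro ⟨w, σ⟩ ⟨v, τ⟩
    ext ⟨i, x⟩
    · rfl
    · show ρ ((w * Perm.arrowCongrHom W σ v) (σ (τ i))) x = ρ (w (σ (τ i))) (ρ (v (τ i)) x)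
      rw [Pi.mul_apply, Perm.arrowCongrHom_apply, symm_apply_apply, map_mul, Perm.mul_apply]

theorem wreathToPerm_apply (ρ : W →* Perm X) (w : ι → W) (σ : Perm ι) (i : ι) (x : X) :
    wreathToPerm ρ ⟨w, σ⟩ (i, x) = (σ i, ρ (w (σ i)) x) := rfl

theorem wreathToPerm_injective [Nonempty X] {ρ : W →* Perm X} (hρ : Function.Injective ρ) :
    Function.Injective (wreathToPerm (ι := ι) ρ) := by
  obtain ⟨x₀⟩ := ‹Nonempty X›
  refine (injective_iff_map_eq_one _).mpr fun ⟨w, σ⟩ h => ?_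
  have hσ : σ = 1 := Equiv.ext fun i => congr_arg Prod.fst congr($h (i, x₀))
  subst hσ
  have hw : w = 1 := funext fun i => hρ <| by
    rw [Pi.one_apply, map_one]
    exact Equiv.ext fun x => congr_arg Prod.snd congr($h (i, x))
  rw [hw]; rfl

theorem mem_range_wreathToPerm [Nonempty X] [IsPretransitive G X] {ρ : W →* Perm X}
    (hρ : ∀ e : Perm X, e ∈ ρ.range ↔ ∀ (g : G) (x : X), e (g • x) = g • e x)
    (f : Perm (ι × X)) : f ∈ (wreathToPerm ρ).range ↔ IsSndEquivariant G f := by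
  constructor
  · rintro ⟨⟨w, σ⟩, rfl⟩ g i x
    simp only [wreathToPerm_apply, (hρ _).mp ⟨_, rfl⟩]
  · intro hf
    obtain ⟨σ, e, rfl, he⟩ := hf.exists_eq_prodShear
    choose v hv using fun i => (hρ (e i)).mpr (he i)
    refine ⟨⟨fun j => v (σ.symm j), σ⟩, Equiv.ext fun ⟨i, x⟩ => ?_⟩
    rw [wreathToPerm_apply, prodShear_apply, symm_apply_apply, hv]

end Wreath

/-- The group of `G`-equivariant bijections of `Fin k × (G ⧸ H)` is isomorphic to the
wreath product `Σ_k ∫ WH`, the semidirect product `(Fin k → WH) ⋊ Perm (Fin k)` with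
`Perm (Fin k)` permuting the coordinates, where `WH = N_G(H) ⧸ H` is the Weyl group. -/
theorem equivariant_perms_copies_iso_wreath (G : Type*) [Group G] (H : Subgroup G)
    (k : ℕ) :
    Nonempty (equivariantPermsProd G H k ≃*
      SemidirectProduct (Fin k → (Subgroup.normalizer (H : Set G) ⧸ H.subgroupOf (Subgroup.normalizer (H : Set G))))
        (Equiv.Perm (Fin k))
        (permuteCoords (Subgroup.normalizer (H : Set G) ⧸ H.subgroupOf (Subgroup.normalizer (H : Set G))) k)) := by
  have hrange : (wreathToPerm (ι := Fin k) (weylToPerm H)).range = equivariantPermsProd G H k :=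
    Subgroup.ext (mem_range_wreathToPerm (mem_range_weylToPerm H))
  exact ⟨((MonoidHom.ofInjective (wreathToPerm_injective (weylToPerm_injective H))).trans
    (MulEquiv.subgroupCongr hrange)).symm⟩
end

section
/- Let G be a finite group and let X and Y be countable G-sets such that for every subgroup H of G, the set of orbits of X that are G-equivariantly bijective to G ⧸ H is infinite, and likewise for Y. Then there exists a G-equivariant bijection X ≃ Y. -/
/-! A `G`-set is the disjoint union of its orbits, and the orbit of `x` is equivariantly
`G ⧸ stabilizer G x`. Hence two `G`-sets are equivariantly bijective as soon as some bijection
between their sets of orbits preserves the orbit type, i.e. the class of `G ⧸ H` up to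
equivariant bijection. Under the hypotheses every orbit type is carried by countably infinitely
many orbits on either side, so the fibres of the two orbit-type maps can be matched. -/

open MulAction

/-- The orbit of `x` is `G`-equivariantly bijective to the coset space `G ⧸ H`. -/
def OrbitIsoTo (G : Type*) [Group G] (H : Subgroup G) {X : Type*} [MulAction G X]
    (x : X) : Prop :=
  ∃ f : MulAction.orbit G x ≃ (G ⧸ H),
    ∀ (g : G) (y : MulAction.orbit G x), f (g • y) = g • f y

def EquivariantlyEquivalent (G X Y : Type*) [SMul G X] [SMul G Y] : Prop :=
  ∃ f : X ≃ Y, ∀ (g : G) (x : X), f (g • x) = g • f x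

namespace EquivariantlyEquivalent

variable {G X Y Z : Type*} [SMul G X] [SMul G Y] [SMul G Z]

variable (G X) in
theorem refl : EquivariantlyEquivalent G X X :=
  ⟨Equiv.refl X, fun _ _ => rfl⟩

theorem symm : EquivariantlyEquivalent G X Y → EquivariantlyEquivalent G Y X := by
  rintro ⟨f, hf⟩
  exact ⟨f.symm, fun g y => f.injective (by rw [hf, f.apply_symm_apply, f.apply_symm_apply])⟩

theorem trans : EquivariantlyEquivalent G X Y → EquivariantlyEquivalent G Y Z →
    EquivariantlyEquivalent G X Z := by
  rintro ⟨f, hf⟩ ⟨f', hf'⟩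
  exact ⟨f.trans f', fun g x => by simp only [Equiv.trans_apply, hf, hf']⟩

theorem sigmaCongr {α β : Type*} {A : α → Type*} {B : β → Type*} [∀ a, SMul G (A a)]
    [∀ b, SMul G (B b)] (e : α ≃ β) (h : ∀ a, EquivariantlyEquivalent G (A a) (B (e a))) :
    EquivariantlyEquivalent G (Σ a, A a) (Σ b, B b) := by
  choose F hF using h
  exact ⟨e.sigmaCongr F, fun g ⟨a, x⟩ => by simp [Equiv.sigmaCongr, Sigma.smul_mk, hF]⟩

end EquivariantlyEquivalent

namespace MulAction

variable {G X : Type*} [Group G] [MulAction G X]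

variable (G X) in
theorem equivariantlyEquivalent_sigma_orbits :
    EquivariantlyEquivalent G X (Σ ω : orbitRel.Quotient G X, orbit G ω.out) :=
  .symm ⟨(selfEquivSigmaOrbits G X).symm, fun _ _ => rfl⟩

theorem equivariantlyEquivalent_quotient_stabilizer (x : X) :
    EquivariantlyEquivalent G (orbit G x) (G ⧸ stabilizer G x) := by
  refine .symm ⟨(orbitEquivQuotientStabilizer G x).symm, fun g q => ?_⟩
  induction q using QuotientGroup.induction_on with
  | H a =>
    apply Subtype.ext
    simp [orbitEquivQuotientStabilizer_symm_apply, mul_smul]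

theorem equivariantlyEquivalent_orbit_of_mem {x y : X} (h : x ∈ orbit G y) :
    EquivariantlyEquivalent G (orbit G x) (orbit G y) :=
  ⟨Equiv.setCongr (orbit_eq_iff.2 h), fun _ _ => rfl⟩

end MulAction

theorem EquivariantlyEquivalent.of_orbits {G X Y : Type*} [Group G] [MulAction G X]
    [MulAction G Y] (e : orbitRel.Quotient G X ≃ orbitRel.Quotient G Y)
    (h : ∀ ω, EquivariantlyEquivalent G (orbit G ω.out) (orbit G (e ω).out)) :
    EquivariantlyEquivalent G X Y :=
  ((equivariantlyEquivalent_sigma_orbits G X).trans (.sigmaCongr e h)).trans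
    (equivariantlyEquivalent_sigma_orbits G Y).symm

section OrbitType

variable (G : Type*) [Group G]

def orbitTypeSetoid : Setoid (Subgroup G) where
  r H K := EquivariantlyEquivalent G (G ⧸ H) (G ⧸ K)
  iseqv := ⟨fun H => .refl G (G ⧸ H), .symm, .trans⟩

variable {G} {X : Type*} [MulAction G X]

noncomputable def orbitType (ω : orbitRel.Quotient G X) : Quotient (orbitTypeSetoid G) :=
  ⟦stabilizer G ω.out⟧

theorem equivariantlyEquivalent_of_orbitType_eq {Y : Type*} [MulAction G Y]
    {ω : orbitRel.Quotient G X} {ω' : orbitRel.Quotient G Y} (h : orbitType ω = orbitType ω') :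
    EquivariantlyEquivalent G (orbit G ω.out) (orbit G ω'.out) :=
  ((equivariantlyEquivalent_quotient_stabilizer _).trans (Quotient.exact h)).trans
    (equivariantlyEquivalent_quotient_stabilizer _).symm

theorem orbitType_eq_mk_iff (H : Subgroup G) (ω : orbitRel.Quotient G X) :
    orbitType ω = ⟦H⟧ ↔ OrbitIsoTo G H ω.out :=
  ⟨fun h => (equivariantlyEquivalent_quotient_stabilizer _).trans (Quotient.exact h),
    fun h => Quotient.sound ((equivariantlyEquivalent_quotient_stabilizer _).symm.trans h)⟩

theorem setOf_orbitIsoTo_eq_orbitType_preimage (H : Subgroup G) :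
    {ω : orbitRel.Quotient G X | ∃ x : X, Quotient.mk (orbitRel G X) x = ω ∧ OrbitIsoTo G H x}
      = orbitType ⁻¹' {⟦H⟧} :=
  Set.ext fun ω => Iff.trans
    ⟨fun ⟨x, hxω, hx⟩ => hxω ▸
      (equivariantlyEquivalent_orbit_of_mem (Quotient.mk_out (s := orbitRel G X) x)).trans hx,
      fun h => ⟨ω.out, ω.out_eq, h⟩⟩
    (orbitType_eq_mk_iff H ω).symm

end OrbitType

theorem countable_G_sets_with_infinitely_many_orbits_iso_general (G : Type*) [Group G]
    (X Y : Type*) [Countable X] [Countable Y] [MulAction G X]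
    [MulAction G Y]
    (hX : ∀ H : Subgroup G,
      {ω : Quotient (MulAction.orbitRel G X) |
        ∃ x : X, Quotient.mk (MulAction.orbitRel G X) x = ω ∧ OrbitIsoTo G H x}.Infinite)
    (hY : ∀ H : Subgroup G,
      {ω : Quotient (MulAction.orbitRel G Y) |
        ∃ y : Y, Quotient.mk (MulAction.orbitRel G Y) y = ω ∧ OrbitIsoTo G H y}.Infinite) :
    ∃ f : X ≃ Y, ∀ (g : G) (x : X), f (g • x) = g • f x := by
  have fiber_equiv : ∀ c, Nonempty ({ω : orbitRel.Quotient G X // orbitType ω = c} ≃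
      {ω : orbitRel.Quotient G Y // orbitType ω = c}) := by
    refine Quotient.ind fun H => ?_
    have : Infinite {ω : orbitRel.Quotient G X // orbitType ω = ⟦H⟧} :=
      (setOf_orbitIsoTo_eq_orbitType_preimage (X := X) H ▸ hX H).to_subtype
    have : Infinite {ω : orbitRel.Quotient G Y // orbitType ω = ⟦H⟧} :=
      (setOf_orbitIsoTo_eq_orbitType_preimage (X := Y) H ▸ hY H).to_subtype
    exact nonempty_equiv_of_countable
  let e := Equiv.ofFiberEquiv fun c => (fiber_equiv c).some
  exact EquivariantlyEquivalent.of_orbits e fun ω =>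
    equivariantlyEquivalent_of_orbitType_eq (Equiv.ofFiberEquiv_map _ ω).symm

/-- Two countable `G`-sets (for a finite group `G`), each of which has infinitely many
orbits `G`-equivariantly bijective to `G ⧸ H` for every subgroup `H`, are
`G`-equivariantly bijective. -/
theorem countable_G_sets_with_infinitely_many_orbits_iso (G : Type*) [Group G]
    [Finite G] (X Y : Type*) [Countable X] [Countable Y] [MulAction G X]
    [MulAction G Y]
    (hX : ∀ H : Subgroup G,
      {ω : Quotient (MulAction.orbitRel G X) |
        ∃ x : X, Quotient.mk (MulAction.orbitRel G X) x = ω ∧ OrbitIsoTo G H x}.Infinite)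
    (hY : ∀ H : Subgroup G,
      {ω : Quotient (MulAction.orbitRel G Y) |
        ∃ y : Y, Quotient.mk (MulAction.orbitRel G Y) y = ω ∧ OrbitIsoTo G H y}.Infinite) :
    ∃ f : X ≃ Y, ∀ (g : G) (x : X), f (g • x) = g • f x :=
  countable_G_sets_with_infinitely_many_orbits_iso_general G X Y hX hY
end
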